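/- Let M be a loopless matroid of rank r on a finite ground set E. If F is a nonempty proper flat of M of rank d, then x_F·α^{r−d} = 0 and x_F·β^{d} = 0 in A*(M). Furthermore, deg_M(α^{r−1}) = 1 and deg_M(β^{r−1}) > 0. -/

import Mathlib

open scoped Classical
open MvPolynomial

namespace ChowPaper

variable {α : Type*}

/-- A matroid is loopless if every element of the ground set is independent as a singleton. -/
def Loopless (M : Matroid α) : Prop := ∀ a ∈ M.E, M.Indep ({a} : Set α)

/-- The (natural-number) rank of a set in a matroid: the supremum of the cardinalities of
independent subsets. -/
noncomputable def rkN (M : Matroid α) (X : Set α) : ℕ :=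
  sSup {n : ℕ | ∃ I, M.Indep I ∧ I ⊆ X ∧ I.ncard = n}

/-- Nonempty proper flats of a matroid. -/
def PFlat (M : Matroid α) (F : Set α) : Prop := M.IsFlat F ∧ F.Nonempty ∧ F ≠ M.E

/-- The index type of variables of the Chow ring: nonempty proper flats. -/
def FlatIdx (M : Matroid α) := {F : Set α // PFlat M F}

variable (R : Type*) [CommRing R]

/-- The polynomial ring `R[x_F : F a nonempty proper flat]`. -/
abbrev Pre (M : Matroid α) := MvPolynomial (FlatIdx M) R

/-- The linear form `∑_{F ∋ i} x_F`. -/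
noncomputable def alphaPre (M : Matroid α) (i : α) : Pre R M :=
  ∑ᶠ F : FlatIdx M, if i ∈ F.1 then X F else 0

/-- The linear form `∑_{F ∌ i} x_F`. -/
noncomputable def betaPre (M : Matroid α) (i : α) : Pre R M :=
  ∑ᶠ F : FlatIdx M, if i ∉ F.1 then X F else 0

/-- The defining ideal of the Chow ring of a matroid:  generated by products `x_F x_G` for
incomparable flats, and the differences `(∑_{F ∋ i} x_F) - (∑_{F ∋ j} x_F)` for `i j` in the
ground set. -/
noncomputable def chowIdeal (M : Matroid α) : Ideal (Pre R M) :=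
  Ideal.span ({p | ∃ F G : FlatIdx M, ¬ F.1 ⊆ G.1 ∧ ¬ G.1 ⊆ F.1 ∧ p = X F * X G} ∪
    {p | ∃ i ∈ M.E, ∃ j ∈ M.E, p = alphaPre R M i - alphaPre R M j})

/-- The Chow ring of a matroid. -/
abbrev Chow (M : Matroid α) := Pre R M ⧸ chowIdeal R M

/-- The quotient map onto the Chow ring. -/
noncomputable def cmk (M : Matroid α) : Pre R M →+* Chow R M :=
  Ideal.Quotient.mk (chowIdeal R M)

/-- The class `x_F` of a nonempty proper flat in the Chow ring. -/
noncomputable def xcls (M : Matroid α) (F : FlatIdx M) : Chow R M := cmk R M (X F)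

/-- The class `x_F` for any set, with the convention that `x_F = 1` when `F` is not a nonempty
proper flat (in particular `x_∅ = x_E = 1`). -/
noncomputable def xv (M : Matroid α) (F : Set α) : Chow R M :=
  if h : PFlat M F then xcls R M ⟨F, h⟩ else 1

/-- The class `α = ∑_{F ∋ i} x_F` in the Chow ring. -/
noncomputable def alpha (M : Matroid α) (i : α) : Chow R M := cmk R M (alphaPre R M i)

/-- The class `β = ∑_{F ∌ i} x_F` in the Chow ring. -/
noncomputable def beta (M : Matroid α) (i : α) : Chow R M := cmk R M (betaPre R M i)

/-- The class `α_S = α - ∑_{S ⊆ F} x_F`. -/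
noncomputable def alphaS (M : Matroid α) (i : α) (S : Set α) : Chow R M :=
  alpha R M i - cmk R M (∑ᶠ F : FlatIdx M, if S ⊆ F.1 then X F else 0)

/-- The class `β_S = β - ∑_{F ⊆ E \ S} x_F`. -/
noncomputable def betaS (M : Matroid α) (i : α) (S : Set α) : Chow R M :=
  beta R M i - cmk R M (∑ᶠ F : FlatIdx M, if F.1 ⊆ M.E \ S then X F else 0)

/-- The sum of the classes of all flats of a given rank `n`. -/
noncomputable def flatsOfRank (M : Matroid α) (n : ℕ) : Chow R M :=
  cmk R M (∑ᶠ F : FlatIdx M, if rkN M F.1 = n then X F else 0)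

/-- The degree-1 class with coefficients `c`, i.e. `∑_F c_F x_F`. -/
noncomputable def lin (M : Matroid α) (c : FlatIdx M → R) : Chow R M :=
  cmk R M (∑ᶠ F : FlatIdx M, MvPolynomial.C (c F) * X F)

/-- `deg` is a degree map for a rank-`r` matroid if it is linear and sends the monomial of every
complete flag `F_1 ⊊ ⋯ ⊊ F_{r-1}` of nonempty proper flats to `1`.  (By Adiprasito–Huh–Katz such
a map exists and its values on the degree-`(r-1)` part of the Chow ring are uniquely
determined.) -/
def IsDegMap (M : Matroid α) (r : ℕ) (deg : Chow R M →ₗ[R] R) : Prop :=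
  ∀ G : Fin (r - 1) → FlatIdx M, (StrictMono fun t => (G t).1) →
    deg (cmk R M (∏ t, X (G t))) = 1

/-- A finite set of subsets is a flag of (nonempty proper) flats if all members are nonempty
proper flats and they are pairwise comparable. -/
def IsFlagF (M : Matroid α) (S : Finset (Set α)) : Prop :=
  (∀ F ∈ S, PFlat M F) ∧ ∀ F ∈ S, ∀ G ∈ S, F ⊆ G ∨ G ⊆ F

/-- A finite set of nonempty proper flats is a flag if its members are pairwise comparable. -/
def IsFlagIdx (M : Matroid α) (S : Finset (FlatIdx M)) : Prop :=
  ∀ F ∈ S, ∀ G ∈ S, F.1 ⊆ G.1 ∨ G.1 ⊆ F.1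

/-- `N_I`: the number of flags of nonempty proper flats whose set of ranks is exactly `I`. -/
noncomputable def Ncount (M : Matroid α) (I : Finset ℕ) : ℕ :=
  {S : Finset (Set α) | IsFlagF M S ∧ S.image (rkN M) = I}.ncard

/-- `N_{I,s}`: the number of flags of nonempty proper flats with rank set `I` none of whose
members contains `s` (equivalently, whose maximal member does not contain `s`). -/
noncomputable def NcountS (M : Matroid α) (I : Finset ℕ) (s : α) : ℕ :=
  {S : Finset (Set α) | IsFlagF M S ∧ S.image (rkN M) = I ∧ ∀ F ∈ S, s ∉ F}.ncard

/-- Combinatorial nefness (property (P3)): for every flag there is a representation with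
coefficients vanishing on the flag and nonnegative on every flat that can be inserted into the
flag. -/
def CombNef (M : Matroid α) (ℓ : Chow ℝ M) : Prop :=
  ∀ S : Finset (FlatIdx M), IsFlagIdx M S →
    ∃ c : FlatIdx M → ℝ, ℓ = lin ℝ M c ∧ (∀ F ∈ S, c F = 0) ∧
      ∀ F : FlatIdx M, F ∉ S → (∀ G ∈ S, F.1 ⊆ G.1 ∨ G.1 ⊆ F.1) → 0 ≤ c F

/-- Combinatorial ampleness: as nefness, with strictly positive coefficients on insertable
flats. -/
def CombAmple (M : Matroid α) (ℓ : Chow ℝ M) : Prop :=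
  ∀ S : Finset (FlatIdx M), IsFlagIdx M S →
    ∃ c : FlatIdx M → ℝ, ℓ = lin ℝ M c ∧ (∀ F ∈ S, c F = 0) ∧
      ∀ F : FlatIdx M, F ∉ S → (∀ G ∈ S, F.1 ⊆ G.1 ∨ G.1 ⊆ F.1) → 0 < c F

/-- Property (P2): for every flag there is a representation with coefficients vanishing on the
flag and nonnegative on all nonempty proper flats. -/
def P2 (M : Matroid α) (ℓ : Chow ℝ M) : Prop :=
  ∀ S : Finset (FlatIdx M), IsFlagIdx M S →
    ∃ c : FlatIdx M → ℝ, ℓ = lin ℝ M c ∧ (∀ F ∈ S, c F = 0) ∧ ∀ F : FlatIdx M, 0 ≤ c F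

/-- The fake effective cone: classes with nonnegative degree against every product of `r - 2`
combinatorially nef classes. -/
noncomputable def FakeEff (M : Matroid α) (r : ℕ) (deg : Chow ℝ M →ₗ[ℝ] ℝ) : Set (Chow ℝ M) :=
  {D | ∀ L : Fin (r - 2) → Chow ℝ M, (∀ t, CombNef M (L t)) → 0 ≤ deg (D * ∏ t, L t)}

/-- The matroid base polytope, as a subset of `α → ℝ`: the convex hull of the indicator
vectors of the bases. -/
noncomputable def polytope (M : Matroid α) : Set (α → ℝ) :=
  convexHull ℝ {x | ∃ B, M.IsBase B ∧ x = B.indicator 1}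

/-- The flag-counting function `N̂_{𝓕,I}` of Theorem 6.2: the number of flags of nonempty proper
flats with rank set `I`, disjoint from `𝓕` and forming a flag of flats together with `𝓕`,
provided every member of `𝓕` is a flat; and `0` otherwise. -/
noncomputable def Nhat (M : Matroid α) (Fl : Finset (Set α)) (I : Finset ℕ) : ℤ :=
  if ∀ F ∈ Fl, M.IsFlat F then
    ({G : Finset (Set α) | IsFlagF M G ∧ G.image (rkN M) = I ∧ Disjoint G Fl ∧
      IsFlagF M (G ∪ Fl)}).ncard
  else 0



section Aux
open Set
variable {M : Matroid α}

lemma closure_flat' (M : Matroid α) (X : Set α) : M.IsFlat (M.closure X) := by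
  rw [Matroid.closure_def]
  haveI : Nonempty {F // M.IsFlat F ∧ X ∩ M.E ⊆ F} :=
    ⟨⟨M.E, M.ground_isFlat, Set.inter_subset_right⟩⟩
  have h := Matroid.IsFlat.iInter (M := M) (Fs := fun F : {F // M.IsFlat F ∧ X ∩ M.E ⊆ F} => F.1)
    (fun F => F.2.1)
  convert h using 1
  rw [Set.sInter_eq_iInter]
  exact Set.iInter_congr fun _ => rfl

lemma rkN_witness (hfin : M.E.Finite) (X : Set α) :
    ∃ I, M.Indep I ∧ I ⊆ X ∧ I.ncard = rkN M X := by
  have h0 : (0 : ℕ) ∈ {n : ℕ | ∃ I, M.Indep I ∧ I ⊆ X ∧ I.ncard = n} :=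
    ⟨∅, M.empty_indep, Set.empty_subset _, Set.ncard_empty _⟩
  have hbdd : BddAbove {n : ℕ | ∃ I, M.Indep I ∧ I ⊆ X ∧ I.ncard = n} := by
    refine ⟨M.E.ncard, fun n hn => ?_⟩
    obtain ⟨I, hI, -, rfl⟩ := hn
    exact Set.ncard_le_ncard hI.subset_ground hfin
  exact Nat.sSup_mem ⟨0, h0⟩ hbdd

lemma ncard_le_rkN (hfin : M.E.Finite) {X I : Set α} (hI : M.Indep I) (hIX : I ⊆ X) :
    I.ncard ≤ rkN M X := by
  have hbdd : BddAbove {n : ℕ | ∃ I, M.Indep I ∧ I ⊆ X ∧ I.ncard = n} := by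
    refine ⟨M.E.ncard, fun n hn => ?_⟩
    obtain ⟨J, hJ, -, rfl⟩ := hn
    exact Set.ncard_le_ncard hJ.subset_ground hfin
  exact le_csSup hbdd ⟨I, hI, hIX, rfl⟩

lemma rkN_basis (hfin : M.E.Finite) {X : Set α} (hX : X ⊆ M.E) :
    ∃ I, M.Indep I ∧ I ⊆ X ∧ I.ncard = rkN M X ∧ X ⊆ M.closure I := by
  obtain ⟨I, hI, hIX, hcard⟩ := rkN_witness hfin X
  refine ⟨I, hI, hIX, hcard, fun x hx => ?_⟩
  by_contra hxc
  have hxI : x ∉ I := fun h => hxc (M.subset_closure I hI.subset_ground h)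
  have hins : M.Indep (insert x I) := by
    rw [hI.insert_indep_iff_of_notMem hxI]
    exact ⟨hX hx, hxc⟩
  have hle := ncard_le_rkN hfin hins (Set.insert_subset hx hIX)
  rw [Set.ncard_insert_of_notMem hxI (hfin.subset hI.subset_ground)] at hle
  omega

lemma rkN_mono (hfin : M.E.Finite) {X Y : Set α} (hXY : X ⊆ Y) : rkN M X ≤ rkN M Y := by
  obtain ⟨I, hI, hIX, hcard⟩ := rkN_witness hfin X
  rw [← hcard]
  exact ncard_le_rkN hfin hI (hIX.trans hXY)

lemma ncard_le_rkN_of_subset_closure (hfin : M.E.Finite) {X I : Set α} (hX : X ⊆ M.E)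
    (hI : M.Indep I) (hIX : I ⊆ M.closure X) : I.ncard ≤ rkN M X := by
  obtain ⟨J, hJ, hJX, hcard, hXJ⟩ := rkN_basis hfin hX
  have hclJ : M.closure X ⊆ M.closure J := Matroid.closure_subset_closure_of_subset_closure hXJ
  by_contra hlt
  push_neg at hlt
  rw [← hcard] at hlt
  have hJfin : J.Finite := hfin.subset hJ.subset_ground
  have hIfin : I.Finite := hfin.subset hI.subset_ground
  have henc : J.encard < I.encard := by
    rw [← hJfin.cast_ncard_eq, ← hIfin.cast_ncard_eq]
    exact_mod_cast hlt
  obtain ⟨e, he, hins⟩ := hJ.augment hI henc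
  have heJ : e ∉ J := he.2
  have : e ∈ M.closure J := hclJ (hIX he.1)
  rw [(hJ.mem_closure_iff_of_notMem heJ)] at this
  exact this.not_indep hins


lemma rkN_indep (hfin : M.E.Finite) {I : Set α} (hI : M.Indep I) : rkN M I = I.ncard := by
  refine le_antisymm ?_ (ncard_le_rkN hfin hI Subset.rfl)
  obtain ⟨J, hJ, hJI, hcard⟩ := rkN_witness hfin I
  rw [← hcard]
  exact Set.ncard_le_ncard hJI (hfin.subset hI.subset_ground)

lemma rkN_closure_le (hfin : M.E.Finite) {X : Set α} (hX : X ⊆ M.E) :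
    rkN M (M.closure X) ≤ rkN M X := by
  obtain ⟨J, hJ, hJI, hcard⟩ := rkN_witness hfin (M.closure X)
  rw [← hcard]
  exact ncard_le_rkN_of_subset_closure hfin hX hJ hJI

lemma rkN_closure_eq (hfin : M.E.Finite) {X : Set α} (hX : X ⊆ M.E) :
    rkN M (M.closure X) = rkN M X :=
  le_antisymm (rkN_closure_le hfin hX) (rkN_mono hfin (M.subset_closure X hX))

lemma rkN_closure_indep (hfin : M.E.Finite) {I : Set α} (hI : M.Indep I) :
    rkN M (M.closure I) = I.ncard := by
  rw [rkN_closure_eq hfin hI.subset_ground, rkN_indep hfin hI]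

lemma flat_rkN_lt (hfin : M.E.Finite) {F G : Set α} (hF : M.IsFlat F) (hG : G ⊆ M.E)
    (hss : F ⊂ G) : rkN M F < rkN M G := by
  obtain ⟨I, hI, hIF, hcard, hFI⟩ := rkN_basis hfin hF.subset_ground
  obtain ⟨e, heG, heF⟩ := Set.exists_of_ssubset hss
  have hclIF : M.closure I ⊆ F := by
    rw [← hF.closure]; exact M.closure_subset_closure hIF
  have heI : e ∉ I := fun h => heF (hIF h)
  have hins : M.Indep (insert e I) := by
    rw [hI.insert_indep_iff_of_notMem heI]
    exact ⟨hG heG, fun hc => heF (hclIF hc)⟩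
  have := ncard_le_rkN hfin hins (Set.insert_subset heG (hIF.trans hss.subset))
  rw [Set.ncard_insert_of_notMem heI (hfin.subset hI.subset_ground)] at this
  omega

lemma flat_eq_of_rkN (hfin : M.E.Finite) {F G : Set α} (hF : M.IsFlat F) (hG : G ⊆ M.E)
    (hFG : F ⊆ G) (hrk : rkN M G ≤ rkN M F) : F = G := by
  by_contra hne
  exact absurd hrk (not_le.mpr (flat_rkN_lt hfin hF hG (hFG.ssubset_of_ne hne)))

lemma rkN_insert_le (hfin : M.E.Finite) (X : Set α) (j : α) :
    rkN M (insert j X) ≤ rkN M X + 1 := by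
  obtain ⟨I, hI, hIX, hcard⟩ := rkN_witness hfin (insert j X)
  rw [← hcard]
  have h1 : (I \ {j}).ncard ≤ rkN M X := by
    refine ncard_le_rkN hfin (hI.subset Set.diff_subset) ?_
    intro x hx
    rcases hIX hx.1 with h | h
    · exact absurd h hx.2
    · exact h
  have hIfin : I.Finite := hfin.subset hI.subset_ground
  by_cases hj : j ∈ I
  · rw [← Set.ncard_diff_singleton_add_one hj hIfin]; omega
  · rw [Set.diff_singleton_eq_self hj] at h1; omega

lemma rkN_cl_insert_flat (hfin : M.E.Finite) {F : Set α} (hF : M.IsFlat F) {j : α}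
    (hj : j ∈ M.E \ F) : rkN M (M.closure (insert j F)) = rkN M F + 1 := by
  have hsub : insert j F ⊆ M.E := Set.insert_subset hj.1 hF.subset_ground
  refine le_antisymm ((rkN_closure_le hfin hsub).trans (rkN_insert_le hfin F j)) ?_
  have hss : F ⊂ M.closure (insert j F) := by
    refine ((Set.subset_insert j F).trans (M.subset_closure _ hsub)).ssubset_of_ne ?_
    intro h
    exact hj.2 (h ▸ M.subset_closure _ hsub (Set.mem_insert j F))
  exact flat_rkN_lt hfin hF (M.closure_subset_ground _) hss

lemma unique_cover (hfin : M.E.Finite) {F H : Set α} (hF : M.IsFlat F) {j : α}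
    (hj : j ∈ M.E \ F) (hH : M.IsFlat H) (hFH : F ⊆ H) (hjH : j ∈ H)
    (hrk : rkN M H = rkN M F + 1) : H = M.closure (insert j F) := by
  have h1 : M.closure (insert j F) ⊆ H := by
    rw [← hH.closure]
    exact M.closure_subset_closure (Set.insert_subset hjH hFH)
  refine (flat_eq_of_rkN hfin (closure_flat' M _) hH.subset_ground h1 ?_).symm
  rw [hrk, rkN_cl_insert_flat hfin hF hj]

lemma closure_empty_loopless (hloop : Loopless M) : M.closure (∅ : Set α) = ∅ := by
  ext x
  simp only [Set.mem_empty_iff_false, iff_false]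
  intro hx
  have hxE : x ∈ M.E := M.mem_ground_of_mem_closure hx
  have h2 := (hloop x hxE).notMem_closure_diff_of_mem (Set.mem_singleton x)
  rw [Set.diff_self] at h2
  exact h2 hx

lemma rkN_empty (hfin : M.E.Finite) : rkN M (∅ : Set α) = 0 := by
  rw [rkN_indep hfin M.empty_indep, Set.ncard_empty]

lemma one_le_rkN (hfin : M.E.Finite) (hloop : Loopless M) {F : Set α} (hFE : F ⊆ M.E)
    (hne : F.Nonempty) : 1 ≤ rkN M F := by
  obtain ⟨x, hx⟩ := hne
  have := ncard_le_rkN hfin (hloop x (hFE hx)) (Set.singleton_subset_iff.mpr hx)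
  simpa using this

lemma exists_sub_flat (hfin : M.E.Finite) {G : Set α} (hG : M.IsFlat G)
    (hm : 1 ≤ rkN M G) : ∃ i ∈ G, ∃ H, M.IsFlat H ∧ H ⊂ G ∧ i ∉ H ∧
      rkN M H + 1 = rkN M G ∧ (2 ≤ rkN M G → H.Nonempty) := by
  obtain ⟨I, hI, hIG, hcard, hGI⟩ := rkN_basis hfin hG.subset_ground
  have hIfin : I.Finite := hfin.subset hI.subset_ground
  have hIne : I.Nonempty := by
    rw [← Set.ncard_pos hIfin] at *; omega
  obtain ⟨i, hiI⟩ := hIne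
  refine ⟨i, hIG hiI, M.closure (I \ {i}), closure_flat' M _, ?_, ?_, ?_, ?_⟩
  · refine Set.ssubset_iff_of_subset ?_ |>.mpr ⟨i, hIG hiI, hI.notMem_closure_diff_of_mem hiI⟩
    rw [← hG.closure]
    exact M.closure_subset_closure (Set.diff_subset.trans hIG)
  · exact hI.notMem_closure_diff_of_mem hiI
  · rw [rkN_closure_indep hfin (hI.subset Set.diff_subset),
      Set.ncard_diff_singleton_add_one hiI hIfin, hcard]
  · intro h2
    have : 1 ≤ (I \ {i}).ncard := by
      have := Set.ncard_diff_singleton_add_one hiI hIfin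
      omega
    have hne : (I \ {i}).Nonempty := by
      rw [← Set.ncard_pos (hIfin.subset Set.diff_subset)]; omega
    exact hne.mono (M.subset_closure _ ((Set.diff_subset.trans hI.subset_ground)))


section Alg
variable {M : Matroid α}

lemma flatIdx_finite (hfin : M.E.Finite) : Finite (FlatIdx M) := by
  have h : {S : Set α | S ⊆ M.E}.Finite := hfin.finite_subsets
  have h2 : Finite {S : Set α // S ⊆ M.E} := h.to_subtype
  refine Finite.of_injective
    (fun F : FlatIdx M => (⟨F.1, F.2.1.subset_ground⟩ : {S : Set α // S ⊆ M.E}))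
    fun a b hab => ?_
  have hv : a.1 = b.1 := by simpa [Subtype.ext_iff] using hab
  exact Subtype.ext hv

lemma alpha_eq (M : Matroid α) {i j : α} (hi : i ∈ M.E) (hj : j ∈ M.E) :
    alpha ℤ M i = alpha ℤ M j := by
  rw [alpha, alpha, cmk, Ideal.Quotient.mk_eq_mk_iff_sub_mem]
  exact Ideal.subset_span (Or.inr ⟨i, hi, j, hj, rfl⟩)

lemma xcls_mul_xcls_eq_zero {F G : FlatIdx M} (h1 : ¬ F.1 ⊆ G.1) (h2 : ¬ G.1 ⊆ F.1) :
    xcls ℤ M F * xcls ℤ M G = 0 := by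
  rw [xcls, xcls, cmk, ← map_mul, Ideal.Quotient.eq_zero_iff_mem]
  exact Ideal.subset_span (Or.inl ⟨F, G, h1, h2, rfl⟩)

lemma beta_eq (hfin : M.E.Finite) {i j : α} (hi : i ∈ M.E) (hj : j ∈ M.E) :
    beta ℤ M i = beta ℤ M j := by
  haveI := flatIdx_finite hfin
  have key : ∀ k : α, alphaPre ℤ M k + betaPre ℤ M k = ∑ᶠ F : FlatIdx M, X F := by
    intro k
    rw [alphaPre, betaPre, ← finsum_add_distrib (Set.toFinite _) (Set.toFinite _)]
    refine finsum_congr fun F => ?_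
    by_cases h : k ∈ F.1 <;> simp [h]
  have h2 : betaPre ℤ M i - betaPre ℤ M j = alphaPre ℤ M j - alphaPre ℤ M i := by
    have := (key i).trans (key j).symm
    linear_combination this
  rw [beta, beta, cmk, Ideal.Quotient.mk_eq_mk_iff_sub_mem, h2]
  exact Ideal.subset_span (Or.inr ⟨j, hj, i, hi, rfl⟩)

lemma mul_alpha (hfin : M.E.Finite) (P : Chow ℤ M) (j : α) :
    P * alpha ℤ M j = ∑ᶠ G : FlatIdx M, if j ∈ G.1 then P * xcls ℤ M G else 0 := by
  haveI := flatIdx_finite hfin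
  rw [alpha, alphaPre, cmk]
  have hmap : (Ideal.Quotient.mk (chowIdeal ℤ M))
      (∑ᶠ F : FlatIdx M, if j ∈ F.1 then (X F : Pre ℤ M) else 0)
      = ∑ᶠ F : FlatIdx M, (Ideal.Quotient.mk (chowIdeal ℤ M))
        (if j ∈ F.1 then (X F : Pre ℤ M) else 0) :=
    (Ideal.Quotient.mk (chowIdeal ℤ M)).toAddMonoidHom.map_finsum (Set.toFinite _)
  rw [hmap, mul_finsum' _ _ (Set.toFinite _)]
  refine finsum_congr fun G => ?_
  by_cases h : j ∈ G.1 <;> simp [h, xcls, cmk]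

lemma mul_beta (hfin : M.E.Finite) (P : Chow ℤ M) (j : α) :
    P * beta ℤ M j = ∑ᶠ G : FlatIdx M, if j ∉ G.1 then P * xcls ℤ M G else 0 := by
  haveI := flatIdx_finite hfin
  rw [beta, betaPre, cmk]
  have hmap : (Ideal.Quotient.mk (chowIdeal ℤ M))
      (∑ᶠ F : FlatIdx M, if j ∉ F.1 then (X F : Pre ℤ M) else 0)
      = ∑ᶠ F : FlatIdx M, (Ideal.Quotient.mk (chowIdeal ℤ M))
        (if j ∉ F.1 then (X F : Pre ℤ M) else 0) :=
    (Ideal.Quotient.mk (chowIdeal ℤ M)).toAddMonoidHom.map_finsum (Set.toFinite _)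
  rw [hmap, mul_finsum' _ _ (Set.toFinite _)]
  refine finsum_congr fun G => ?_
  by_cases h : j ∈ G.1 <;> simp [h, xcls, cmk]


lemma pflat_ssubset (F : FlatIdx M) : F.1 ⊂ M.E :=
  F.2.1.subset_ground.ssubset_of_ne F.2.2.2

lemma rkN_lt_of_pflat (hfin : M.E.Finite) {r : ℕ} (hr : rkN M M.E = r) (F : FlatIdx M) :
    rkN M F.1 < r :=
  hr ▸ flat_rkN_lt hfin F.2.1 Subset.rfl (pflat_ssubset F)

lemma factA (hfin : M.E.Finite) {r : ℕ} (hr : rkN M M.E = r) {i : α} (hi : i ∈ M.E) :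
    ∀ n : ℕ, ∀ F : FlatIdx M, r - rkN M F.1 ≤ n →
      xcls ℤ M F * alpha ℤ M i ^ (r - rkN M F.1) = 0 := by
  haveI := flatIdx_finite hfin
  intro n
  induction n with
  | zero =>
    intro F hF
    have := rkN_lt_of_pflat hfin hr F
    omega
  | succ n ih =>
    intro F hF
    have hlt := rkN_lt_of_pflat hfin hr F
    set k := r - rkN M F.1 with hkdef
    have hk : 1 ≤ k := by omega
    obtain ⟨j, hjE, hjF⟩ := Set.exists_of_ssubset (pflat_ssubset F)
    have hsplit : k = 1 + (k - 1) := by omega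
    have hstep := mul_alpha hfin (xcls ℤ M F) j
    rw [← alpha_eq M hi hjE] at hstep
    rw [hsplit, pow_add, pow_one, ← mul_assoc, hstep, finsum_mul' _ _ (Set.toFinite _)]
    refine Eq.trans (finsum_congr fun G => ?_) finsum_zero
    by_cases hjG : j ∈ G.1
    · rw [if_pos hjG]
      by_cases hFG : F.1 ⊆ G.1
      · have hne : F.1 ≠ G.1 := fun h => hjF (h ▸ hjG)
        have hrklt : rkN M F.1 < rkN M G.1 :=
          flat_rkN_lt hfin F.2.1 G.2.1.subset_ground (hFG.ssubset_of_ne hne)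
        have hGlt := rkN_lt_of_pflat hfin hr G
        have h0 := ih G (by omega)
        have hsplit2 : k - 1 = (r - rkN M G.1) + ((k - 1) - (r - rkN M G.1)) := by omega
        rw [hsplit2, pow_add]
        have hre : xcls ℤ M F * xcls ℤ M G *
            (alpha ℤ M i ^ (r - rkN M G.1) * alpha ℤ M i ^ ((k - 1) - (r - rkN M G.1)))
            = (xcls ℤ M G * alpha ℤ M i ^ (r - rkN M G.1)) *
              (xcls ℤ M F * alpha ℤ M i ^ ((k - 1) - (r - rkN M G.1))) := by ring
        rw [hre, h0, zero_mul]
      · by_cases hGF : G.1 ⊆ F.1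
        · exact absurd (hGF hjG) hjF
        · rw [xcls_mul_xcls_eq_zero hFG hGF, zero_mul]
    · rw [if_neg hjG, zero_mul]

lemma factA' (hfin : M.E.Finite) {r : ℕ} (hr : rkN M M.E = r) {i : α} (hi : i ∈ M.E)
    (F : FlatIdx M) {m : ℕ} (hm : r - rkN M F.1 ≤ m) :
    xcls ℤ M F * alpha ℤ M i ^ m = 0 := by
  rw [show m = (r - rkN M F.1) + (m - (r - rkN M F.1)) from by omega, pow_add, ← mul_assoc,
    factA hfin hr hi _ F le_rfl, zero_mul]

lemma factB (hfin : M.E.Finite) (hloop : Loopless M) {i : α} (hi : i ∈ M.E) :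
    ∀ n : ℕ, ∀ F : FlatIdx M, rkN M F.1 ≤ n →
      xcls ℤ M F * beta ℤ M i ^ (rkN M F.1) = 0 := by
  haveI := flatIdx_finite hfin
  intro n
  induction n with
  | zero =>
    intro F hF
    have := one_le_rkN hfin hloop F.2.1.subset_ground F.2.2.1
    omega
  | succ n ih =>
    intro F hF
    set d := rkN M F.1 with hddef
    have hd : 1 ≤ d := one_le_rkN hfin hloop F.2.1.subset_ground F.2.2.1
    obtain ⟨j, hjF⟩ := F.2.2.1
    have hjE : j ∈ M.E := F.2.1.subset_ground hjF
    have hsplit : d = 1 + (d - 1) := by omega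
    have hstep := mul_beta hfin (xcls ℤ M F) j
    rw [← beta_eq hfin hi hjE] at hstep
    rw [hsplit, pow_add, pow_one, ← mul_assoc, hstep, finsum_mul' _ _ (Set.toFinite _)]
    refine Eq.trans (finsum_congr fun G => ?_) finsum_zero
    by_cases hjG : j ∉ G.1
    · rw [if_pos hjG]
      by_cases hGF : G.1 ⊆ F.1
      · have hne : G.1 ≠ F.1 := fun h => hjG (h ▸ hjF)
        have hrklt : rkN M G.1 < d :=
          flat_rkN_lt hfin G.2.1 F.2.1.subset_ground (hGF.ssubset_of_ne hne)
        have h0 := ih G (by omega)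
        have hsplit2 : d - 1 = rkN M G.1 + ((d - 1) - rkN M G.1) := by omega
        rw [hsplit2, pow_add]
        have hre : xcls ℤ M F * xcls ℤ M G *
            (beta ℤ M i ^ (rkN M G.1) * beta ℤ M i ^ ((d - 1) - rkN M G.1))
            = (xcls ℤ M G * beta ℤ M i ^ (rkN M G.1)) *
              (xcls ℤ M F * beta ℤ M i ^ ((d - 1) - rkN M G.1)) := by ring
        rw [hre, h0, zero_mul]
      · by_cases hFG : F.1 ⊆ G.1
        · exact absurd (hFG hjF) hjG
        · rw [xcls_mul_xcls_eq_zero hFG hGF, zero_mul]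
    · rw [if_neg hjG, zero_mul]

lemma factB' (hfin : M.E.Finite) (hloop : Loopless M) {i : α} (hi : i ∈ M.E)
    (F : FlatIdx M) {m : ℕ} (hm : rkN M F.1 ≤ m) :
    xcls ℤ M F * beta ℤ M i ^ m = 0 := by
  rw [show m = rkN M F.1 + (m - rkN M F.1) from by omega, pow_add, ← mul_assoc,
    factB hfin hloop hi _ F le_rfl, zero_mul]
lemma ne_ground_of_rkN_lt {r : ℕ} (hr : rkN M M.E = r) {S : Set α} (h : rkN M S < r) :
    S ≠ M.E := fun he => by rw [he, hr] at h; exact lt_irrefl _ h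

lemma snoc_strictMono {k : ℕ} {c : Fin k → FlatIdx M} (hc : StrictMono fun t => (c t).1)
    {G : FlatIdx M} (hG : ∀ t, (c t).1 ⊂ G.1) :
    StrictMono fun t : Fin (k + 1) => ((Fin.snoc c G : Fin (k + 1) → FlatIdx M) t).1 := by
  intro s t hst
  by_cases ht : t = Fin.last k
  · subst ht
    obtain ⟨s', rfl⟩ := Fin.eq_castSucc_of_ne_last (ne_of_lt hst)
    simp only [Fin.snoc_castSucc, Fin.snoc_last]
    exact Set.lt_iff_ssubset.mpr (hG s')
  · obtain ⟨t', rfl⟩ := Fin.eq_castSucc_of_ne_last ht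
    have hs : s ≠ Fin.last k := by
      intro h
      subst h
      exact absurd hst (Fin.castSucc_lt_last t').asymm
    obtain ⟨s', rfl⟩ := Fin.eq_castSucc_of_ne_last hs
    simp only [Fin.snoc_castSucc]
    exact hc (Fin.castSucc_lt_castSucc_iff.mp hst)

lemma snoc_strictAnti {k : ℕ} {c : Fin k → FlatIdx M} (hc : StrictAnti fun t => (c t).1)
    {G : FlatIdx M} (hG : ∀ t, G.1 ⊂ (c t).1) :
    StrictAnti fun t : Fin (k + 1) => ((Fin.snoc c G : Fin (k + 1) → FlatIdx M) t).1 := by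
  intro s t hst
  by_cases ht : t = Fin.last k
  · subst ht
    obtain ⟨s', rfl⟩ := Fin.eq_castSucc_of_ne_last (ne_of_lt hst)
    simp only [Fin.snoc_castSucc, Fin.snoc_last]
    exact Set.lt_iff_ssubset.mpr (hG s')
  · obtain ⟨t', rfl⟩ := Fin.eq_castSucc_of_ne_last ht
    have hs : s ≠ Fin.last k := by
      intro h
      subst h
      exact absurd hst (Fin.castSucc_lt_last t').asymm
    obtain ⟨s', rfl⟩ := Fin.eq_castSucc_of_ne_last hs
    simp only [Fin.snoc_castSucc]
    exact hc (Fin.castSucc_lt_castSucc_iff.mp hst)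

lemma claimC_main (hfin : M.E.Finite) {r : ℕ} (hr : rkN M M.E = r)
    {i : α} (hi : i ∈ M.E) (deg : Chow ℤ M →ₗ[ℤ] ℤ)
    {m k : ℕ} (hk : k + (m + 1) = r - 1)
    (c : Fin k → FlatIdx M) (hrk : ∀ t, rkN M (c t).1 = t.1 + 1)
    (hmono : StrictMono fun t => (c t).1)
    {F : Set α} (hF : M.IsFlat F) (hrkF : rkN M F = k) (hsub : ∀ t, (c t).1 ⊆ F)
    {j : α} (hjE : j ∈ M.E) (hjF : j ∉ F)
    (hkill : ∀ G : FlatIdx M, j ∈ G.1 → ¬ F ⊂ G.1 →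
      cmk ℤ M (∏ t, X (c t)) * xcls ℤ M G = 0)
    (IH : ∀ c' : Fin (k + 1) → FlatIdx M, StrictMono (fun t => (c' t).1) →
      (∀ t, rkN M (c' t).1 = t.1 + 1) →
      deg (cmk ℤ M (∏ t, X (c' t)) * alpha ℤ M i ^ m) = 1) :
    deg (cmk ℤ M (∏ t, X (c t)) * alpha ℤ M i ^ (m + 1)) = 1 := by
  haveI := flatIdx_finite hfin
  have harith : r = k + m + 2 := by omega
  have hFE : F ⊆ M.E := hF.subset_ground
  have hins : insert j F ⊆ M.E := Set.insert_subset hjE hFE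
  have hjG0 : j ∈ M.closure (insert j F) := M.subset_closure _ hins (Set.mem_insert j F)
  have hFsubG0 : F ⊆ M.closure (insert j F) :=
    (Set.subset_insert j F).trans (M.subset_closure _ hins)
  have hFG0 : F ⊂ M.closure (insert j F) := by
    refine hFsubG0.ssubset_of_ne fun h => hjF ?_
    rw [h]; exact hjG0
  have hrkG0 : rkN M (M.closure (insert j F)) = k + 1 := by
    rw [rkN_cl_insert_flat hfin hF ⟨hjE, hjF⟩, hrkF]
  have hG0pf : PFlat M (M.closure (insert j F)) :=
    ⟨closure_flat' M _, ⟨j, hjG0⟩, ne_ground_of_rkN_lt hr (by omega)⟩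
  set G0 : FlatIdx M := ⟨M.closure (insert j F), hG0pf⟩ with hG0def
  have e1 : cmk ℤ M (∏ t, X (c t)) * alpha ℤ M i ^ (m + 1)
      = (cmk ℤ M (∏ t, X (c t)) * alpha ℤ M i) * alpha ℤ M i ^ m := by ring
  have e2 := mul_alpha hfin (cmk ℤ M (∏ t, X (c t))) j
  rw [← alpha_eq M hi hjE] at e2
  rw [e1, e2, finsum_mul' _ _ (Set.toFinite _)]
  have e3 : ∀ G : FlatIdx M,
      (if j ∈ G.1 then cmk ℤ M (∏ t, X (c t)) * xcls ℤ M G else 0) * alpha ℤ M i ^ m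
      = if G = G0 then (cmk ℤ M (∏ t, X (c t)) * xcls ℤ M G0) * alpha ℤ M i ^ m else 0 := by
    intro G
    by_cases hGeq : G = G0
    · subst hGeq
      rw [if_pos hjG0, if_pos rfl]
    · rw [if_neg hGeq]
      by_cases hjG : j ∈ G.1
      · rw [if_pos hjG]
        by_cases hFG : F ⊂ G.1
        · have hrkG : k < rkN M G.1 := by
            rw [← hrkF]
            exact flat_rkN_lt hfin hF G.2.1.subset_ground hFG
          by_cases hrkeq : rkN M G.1 = k + 1
          · exfalso
            refine hGeq (Subtype.ext ?_)
            exact unique_cover hfin hF ⟨hjE, hjF⟩ G.2.1 hFG.subset hjG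
              (by rw [hrkeq, hrkF])
          · have h0 : xcls ℤ M G * alpha ℤ M i ^ m = 0 :=
              factA' hfin hr hi G (by omega)
            have hre : (cmk ℤ M (∏ t, X (c t)) * xcls ℤ M G) * alpha ℤ M i ^ m
                = cmk ℤ M (∏ t, X (c t)) * (xcls ℤ M G * alpha ℤ M i ^ m) := by ring
            rw [hre, h0, mul_zero]
        · rw [hkill G hjG hFG, zero_mul]
      · rw [if_neg hjG, zero_mul]
  rw [finsum_congr e3, finsum_eq_single _ G0 (fun x hx => if_neg hx), if_pos rfl]
  have e4 : cmk ℤ M (∏ t, X (c t)) * xcls ℤ M G0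
      = cmk ℤ M (∏ t : Fin (k + 1), X ((Fin.snoc c G0 : Fin (k + 1) → FlatIdx M) t)) := by
    rw [Fin.prod_univ_castSucc]
    simp only [Fin.snoc_castSucc, Fin.snoc_last]
    rw [map_mul]
    rfl
  rw [e4]
  refine IH _ (snoc_strictMono hmono fun t => ssubset_of_subset_of_ssubset (hsub t) hFG0) ?_
  intro t
  by_cases ht : t = Fin.last k
  · subst ht
    simp only [Fin.snoc_last, Fin.val_last]
    exact hrkG0
  · obtain ⟨t', rfl⟩ := Fin.eq_castSucc_of_ne_last ht
    simp only [Fin.snoc_castSucc, Fin.coe_castSucc]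
    exact hrk t'

lemma claimC (hfin : M.E.Finite) (hloop : Loopless M) {r : ℕ} (hr : rkN M M.E = r)
    {i : α} (hi : i ∈ M.E) (deg : Chow ℤ M →ₗ[ℤ] ℤ) (hdeg : IsDegMap ℤ M r deg) :
    ∀ m k : ℕ, k + m = r - 1 → ∀ c : Fin k → FlatIdx M,
      StrictMono (fun t => (c t).1) → (∀ t, rkN M (c t).1 = t.1 + 1) →
      deg (cmk ℤ M (∏ t, X (c t)) * alpha ℤ M i ^ m) = 1 := by
  intro m
  induction m with
  | zero =>
    intro k hk c hmono hrk
    have hkr : k = r - 1 := by omega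
    subst hkr
    rw [pow_zero, mul_one]
    exact hdeg c hmono
  | succ m ih =>
    intro k hk c hmono hrk
    match k, c, hrk, hmono, hk with
    | 0, c, hrk, hmono, hk =>
      have hFflat : M.IsFlat (∅ : Set α) := by
        rw [← closure_empty_loopless hloop]
        exact closure_flat' M ∅
      have hne : (∅ : Set α) ≠ M.E := by
        refine ne_ground_of_rkN_lt hr ?_
        rw [rkN_empty hfin]
        omega
      obtain ⟨j, hjE⟩ : M.E.Nonempty := Set.nonempty_iff_ne_empty.mpr (Ne.symm hne)
      have hjF : j ∉ (∅ : Set α) := Set.notMem_empty j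
      refine claimC_main hfin hr hi deg hk c hrk hmono hFflat (rkN_empty hfin)
        (fun t => t.elim0) hjE hjF ?_ (fun c' h1 h2 => ih 1 (by omega) c' h1 h2)
      intro G hjG hFG
      exact absurd (Set.empty_ssubset.mpr G.2.2.1) hFG
    | (k' + 1), c, hrk, hmono, hk =>
      set Fi : FlatIdx M := c (Fin.last k') with hFidef
      obtain ⟨j, hjE, hjF⟩ := Set.exists_of_ssubset (pflat_ssubset Fi)
      refine claimC_main hfin hr hi deg hk c hrk hmono Fi.2.1 ?_ ?_ hjE hjF ?_
        (fun c' h1 h2 => ih (k' + 2) (by omega) c' h1 h2)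
      · rw [hrk (Fin.last k'), Fin.val_last]
      · exact fun t => hmono.monotone (Fin.le_last t)
      · intro G hjG hFG
        have h1 : ¬ Fi.1 ⊆ G.1 := by
          intro hsub2
          refine hFG (hsub2.ssubset_of_ne fun h => hjF ?_)
          rw [h]; exact hjG
        have h2 : ¬ G.1 ⊆ Fi.1 := fun hsub2 => hjF (hsub2 hjG)
        rw [Fin.prod_univ_castSucc, map_mul, mul_assoc]
        have : cmk ℤ M (X (c (Fin.last k'))) * xcls ℤ M G = 0 :=
          xcls_mul_xcls_eq_zero h1 h2
        rw [this, mul_zero]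

lemma claimD_main (hfin : M.E.Finite) (hloop : Loopless M) {r : ℕ} (hr : rkN M M.E = r)
    {i : α} (hi : i ∈ M.E) (deg : Chow ℤ M →ₗ[ℤ] ℤ)
    {m k : ℕ} (hk : k + (m + 1) = r - 1)
    (c : Fin k → FlatIdx M) (hrk : ∀ t, rkN M (c t).1 = r - 1 - t.1)
    (hmono : StrictAnti fun t => (c t).1)
    {F : Set α} (hF : M.IsFlat F) (hrkF : rkN M F = m + 2) (hsub : ∀ t, F ⊆ (c t).1)
    (hkill : ∀ G : FlatIdx M, ∀ x ∈ F, x ∉ G.1 → ¬ G.1 ⊂ F →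
      cmk ℤ M (∏ t, X (c t)) * xcls ℤ M G = 0)
    (IH : ∀ c' : Fin (k + 1) → FlatIdx M, StrictAnti (fun t => (c' t).1) →
      (∀ t, rkN M (c' t).1 = r - 1 - t.1) →
      1 ≤ deg (cmk ℤ M (∏ t, X (c' t)) * beta ℤ M i ^ m)) :
    1 ≤ deg (cmk ℤ M (∏ t, X (c t)) * beta ℤ M i ^ (m + 1)) := by
  haveI := flatIdx_finite hfin
  haveI : Fintype (FlatIdx M) := Fintype.ofFinite _
  have harith : r = k + m + 2 := by omega
  have hFE : F ⊆ M.E := hF.subset_ground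
  obtain ⟨i0, hi0F, H, hHflat, hHF, hi0H, hrkH, hHne⟩ :=
    exists_sub_flat hfin hF (by omega)
  have hi0E : i0 ∈ M.E := hFE hi0F
  have hrkH' : rkN M H = m + 1 := by omega
  have hHpf : PFlat M H :=
    ⟨hHflat, hHne (by omega), ne_ground_of_rkN_lt hr (by omega)⟩
  set H0 : FlatIdx M := ⟨H, hHpf⟩ with hH0def
  have e1 : cmk ℤ M (∏ t, X (c t)) * beta ℤ M i ^ (m + 1)
      = (cmk ℤ M (∏ t, X (c t)) * beta ℤ M i) * beta ℤ M i ^ m := by ring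
  have e2 := mul_beta hfin (cmk ℤ M (∏ t, X (c t))) i0
  rw [← beta_eq hfin hi hi0E] at e2
  rw [e1, e2, finsum_mul' _ _ (Set.toFinite _)]
  have e3 : ∀ G : FlatIdx M,
      (if i0 ∉ G.1 then cmk ℤ M (∏ t, X (c t)) * xcls ℤ M G else 0) * beta ℤ M i ^ m
      = if (G.1 ⊂ F ∧ i0 ∉ G.1 ∧ rkN M G.1 = m + 1) then
          (cmk ℤ M (∏ t, X (c t)) * xcls ℤ M G) * beta ℤ M i ^ m else 0 := by
    intro G
    by_cases hiG : i0 ∉ G.1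
    · rw [if_pos hiG]
      by_cases hGF : G.1 ⊂ F
      · by_cases hrkG : rkN M G.1 = m + 1
        · rw [if_pos ⟨hGF, hiG, hrkG⟩]
        · rw [if_neg (by tauto)]
          have hlt : rkN M G.1 < m + 2 := by
            rw [← hrkF]
            exact flat_rkN_lt hfin G.2.1 hFE hGF
          have h0 : xcls ℤ M G * beta ℤ M i ^ m = 0 :=
            factB' hfin hloop hi G (by omega)
          have hre : (cmk ℤ M (∏ t, X (c t)) * xcls ℤ M G) * beta ℤ M i ^ m
              = cmk ℤ M (∏ t, X (c t)) * (xcls ℤ M G * beta ℤ M i ^ m) := by ring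
          rw [hre, h0, mul_zero]
      · rw [if_neg (by tauto), hkill G i0 hi0F hiG hGF, zero_mul]
    · rw [if_neg hiG, if_neg (by tauto), zero_mul]
  rw [finsum_congr e3]
  have hdegsum : deg (∑ᶠ G : FlatIdx M,
      if (G.1 ⊂ F ∧ i0 ∉ G.1 ∧ rkN M G.1 = m + 1) then
        (cmk ℤ M (∏ t, X (c t)) * xcls ℤ M G) * beta ℤ M i ^ m else 0)
      = ∑ᶠ G : FlatIdx M, deg (if (G.1 ⊂ F ∧ i0 ∉ G.1 ∧ rkN M G.1 = m + 1) then
        (cmk ℤ M (∏ t, X (c t)) * xcls ℤ M G) * beta ℤ M i ^ m else 0) :=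
    deg.toAddMonoidHom.map_finsum (Set.toFinite _)
  rw [hdegsum, finsum_eq_sum_of_fintype]
  have hterm : ∀ G : FlatIdx M, (G.1 ⊂ F ∧ i0 ∉ G.1 ∧ rkN M G.1 = m + 1) →
      1 ≤ deg ((cmk ℤ M (∏ t, X (c t)) * xcls ℤ M G) * beta ℤ M i ^ m) := by
    intro G ⟨hGF, hiG, hrkG⟩
    have e4 : cmk ℤ M (∏ t, X (c t)) * xcls ℤ M G
        = cmk ℤ M (∏ t : Fin (k + 1), X ((Fin.snoc c G : Fin (k + 1) → FlatIdx M) t)) := by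
      rw [Fin.prod_univ_castSucc]
      simp only [Fin.snoc_castSucc, Fin.snoc_last]
      rw [map_mul]
      rfl
    rw [e4]
    refine IH _ (snoc_strictAnti hmono fun t => ssubset_of_ssubset_of_subset hGF (hsub t)) ?_
    intro t
    by_cases ht : t = Fin.last k
    · subst ht
      simp only [Fin.snoc_last, Fin.val_last]
      omega
    · obtain ⟨t', rfl⟩ := Fin.eq_castSucc_of_ne_last ht
      simp only [Fin.snoc_castSucc, Fin.coe_castSucc]
      exact hrk t'
  have hnonneg : ∀ G : FlatIdx M, G ∈ Finset.univ →
      0 ≤ deg (if (G.1 ⊂ F ∧ i0 ∉ G.1 ∧ rkN M G.1 = m + 1) then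
        (cmk ℤ M (∏ t, X (c t)) * xcls ℤ M G) * beta ℤ M i ^ m else 0) := by
    intro G _
    by_cases h : (G.1 ⊂ F ∧ i0 ∉ G.1 ∧ rkN M G.1 = m + 1)
    · rw [if_pos h]
      exact le_trans (by norm_num) (hterm G h)
    · rw [if_neg h, map_zero]
  have hH0cond : H0.1 ⊂ F ∧ i0 ∉ H0.1 ∧ rkN M H0.1 = m + 1 := ⟨hHF, hi0H, hrkH'⟩
  calc (1 : ℤ) ≤ deg (if (H0.1 ⊂ F ∧ i0 ∉ H0.1 ∧ rkN M H0.1 = m + 1) then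
        (cmk ℤ M (∏ t, X (c t)) * xcls ℤ M H0) * beta ℤ M i ^ m else 0) := by
        rw [if_pos hH0cond]; exact hterm H0 hH0cond
    _ ≤ _ := Finset.single_le_sum hnonneg (Finset.mem_univ H0)

lemma claimD (hfin : M.E.Finite) (hloop : Loopless M) {r : ℕ} (hr : rkN M M.E = r)
    {i : α} (hi : i ∈ M.E) (deg : Chow ℤ M →ₗ[ℤ] ℤ) (hdeg : IsDegMap ℤ M r deg) :
    ∀ m k : ℕ, k + m = r - 1 → ∀ c : Fin k → FlatIdx M,
      StrictAnti (fun t => (c t).1) → (∀ t, rkN M (c t).1 = r - 1 - t.1) →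
      1 ≤ deg (cmk ℤ M (∏ t, X (c t)) * beta ℤ M i ^ m) := by
  intro m
  induction m with
  | zero =>
    intro k hk c hmono hrk
    have hkr : k = r - 1 := by omega
    subst hkr
    rw [pow_zero, mul_one]
    have hprod : (∏ t : Fin (r - 1), (X (c t) : Pre ℤ M))
        = ∏ t : Fin (r - 1), (X (c (Fin.rev t)) : Pre ℤ M) :=
      (Fintype.prod_equiv (Fin.revPerm (n := r - 1))
        (fun t => (X (c (Fin.rev t)) : Pre ℤ M)) (fun t => (X (c t) : Pre ℤ M))
        (fun t => rfl)).symm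
    rw [hprod]
    have hmono' : StrictMono fun t : Fin (r - 1) => ((c (Fin.rev t)) : FlatIdx M).1 := by
      intro s t hst
      exact hmono (Fin.rev_lt_rev.mpr hst)
    have := hdeg (fun t => c (Fin.rev t)) hmono'
    rw [this]
  | succ m ih =>
    intro k hk c hmono hrk
    match k, c, hrk, hmono, hk with
    | 0, c, hrk, hmono, hk =>
      refine claimD_main hfin hloop hr hi deg hk c hrk hmono M.ground_isFlat
        (by rw [hr]; omega) (fun t => t.elim0) ?_
        (fun c' h1 h2 => ih 1 (by omega) c' h1 h2)
      intro G x hxF hxG hGF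
      exact absurd (pflat_ssubset G) hGF
    | (k' + 1), c, hrk, hmono, hk =>
      set Fi : FlatIdx M := c (Fin.last k') with hFidef
      refine claimD_main hfin hloop hr hi deg hk c hrk hmono Fi.2.1 ?_ ?_ ?_
        (fun c' h1 h2 => ih (k' + 2) (by omega) c' h1 h2)
      · rw [hrk (Fin.last k'), Fin.val_last]; omega
      · exact fun t => hmono.antitone (Fin.le_last t)
      · intro G x hxF hxG hGF
        have h2 : ¬ G.1 ⊆ Fi.1 := by
          intro hsub2
          exact hGF (hsub2.ssubset_of_ne fun h => hxG (h ▸ hxF))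
        have h1 : ¬ Fi.1 ⊆ G.1 := fun hsub2 => hxG (hsub2 hxF)
        rw [Fin.prod_univ_castSucc, map_mul, mul_assoc]
        have : cmk ℤ M (X (c (Fin.last k'))) * xcls ℤ M G = 0 :=
          xcls_mul_xcls_eq_zero h1 h2
        rw [this, mul_zero]

end Alg
end Aux

/-- Basic properties of `α` and `β`: for a flat `F` of rank `d`, `x_F α^{r-d} = 0` and
`x_F β^d = 0`; moreover `deg(α^{r-1}) = 1` and `deg(β^{r-1}) > 0`. -/
theorem stmt3 (M : Matroid α) (hfin : M.E.Finite) (hloop : Loopless M)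
    (r : ℕ) (hr : rkN M M.E = r)
    (F : Set α) (hF : PFlat M F) (d : ℕ) (hd : rkN M F = d)
    (i : α) (hi : i ∈ M.E)
    (deg : Chow ℤ M →ₗ[ℤ] ℤ) (hdeg : IsDegMap ℤ M r deg) :
    xv ℤ M F * (alpha ℤ M i) ^ (r - d) = 0 ∧
    xv ℤ M F * (beta ℤ M i) ^ d = 0 ∧
    deg ((alpha ℤ M i) ^ (r - 1)) = 1 ∧
    0 < deg ((beta ℤ M i) ^ (r - 1)) := by
  subst hr hd
  haveI := flatIdx_finite hfin
  have hFidx : PFlat M F := hF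
  set Fi : FlatIdx M := ⟨F, hF⟩ with hFidef
  have hxv : xv ℤ M F = xcls ℤ M Fi := by rw [xv, dif_pos hF]
  refine ⟨?_, ?_, ?_, ?_⟩
  · rw [hxv]
    exact factA' hfin rfl hi Fi le_rfl
  · rw [hxv]
    exact factB' hfin hloop hi Fi le_rfl
  · have h := claimC hfin hloop rfl hi deg hdeg (rkN M M.E - 1) 0 (by omega)
      (fun t => t.elim0) (fun a => a.elim0) (fun t => t.elim0)
    have hone : cmk ℤ M (∏ t : Fin 0, X ((fun t : Fin 0 => t.elim0) t)) = 1 := by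
      rw [show (∏ t : Fin 0, (X ((fun t : Fin 0 => t.elim0 (α := FlatIdx M)) t) : Pre ℤ M)) = 1
        from Finset.prod_of_isEmpty _, map_one]
    rw [hone, one_mul] at h
    exact h
  · have h := claimD hfin hloop rfl hi deg hdeg (rkN M M.E - 1) 0 (by omega)
      (fun t => t.elim0) (fun a => a.elim0) (fun t => t.elim0)
    have hone : cmk ℤ M (∏ t : Fin 0, X ((fun t : Fin 0 => t.elim0) t)) = 1 := by
      rw [show (∏ t : Fin 0, (X ((fun t : Fin 0 => t.elim0 (α := FlatIdx M)) t) : Pre ℤ M)) = 1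
        from Finset.prod_of_isEmpty _, map_one]
    rw [hone, one_mul] at h
    omega



end ChowPaper
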